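/- Let E be a Banach space, U ⊆ E open, f, g : U → E be C¹ vector fields, and suppose f admits a C¹ local flow Φ : Ω → U (an open neighborhood Ω of {0} × U in ℝ × U with ∂Φ/∂t = f∘Φ, Φ(0,·) = id). Then for each p ∈ U, d/ds|_{s=0} [ DΦ(−s, Φ(s,p)) ( g(Φ(s,p)) ) ] = dg(p)(f(p)) − df(p)(g(p)), i.e. the derivative at 0 of the pullback of g along the flow of f equals the Lie bracket [f,g](p). -/

import Mathlib

/-!
Write `F(t, x) = Φ t x` and `B = D²F(0, p)`, which is symmetric since `F` is `C²`.
Because `F(0, ·) = id` and `∂ₜF = f ∘ F`, the first derivative at time `0` is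
`DF(0, x)(a, v) = a • f x + v` for `x` near `p`; differentiating this in `x` gives
`B((0, w), (1, 0)) = Df(p) w` and `B((0, w), (0, v)) = 0`. The curve `s ↦ (-s, Φ s p)`
has velocity `(-1, f p)`, so by symmetry `d/ds DΦ(-s, Φ(s, p))` at `0` is
`w ↦ B((-1, f p), (0, w)) = -Df(p) w`. The product rule with `s ↦ g(Φ(s, p))` and
`DΦ(0, p) = id` then yields `Dg(p)(f p) - Df(p)(g p)`.
-/

open Topology Filter ContinuousLinearMap

section Slices

variable {𝕜 P E F V : Type*} [NontriviallyNormedField 𝕜]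
  [NormedAddCommGroup P] [NormedSpace 𝕜 P] [NormedAddCommGroup E] [NormedSpace 𝕜 E]
  [NormedAddCommGroup F] [NormedSpace 𝕜 F] [NormedAddCommGroup V] [NormedSpace 𝕜 V]

theorem ContDiffAt.hasFDerivAt_fderiv {n : WithTop ℕ∞} {φ : E → F} {x : E}
    (hφ : ContDiffAt 𝕜 n φ x) (hn : 2 ≤ n) :
    HasFDerivAt (fderiv 𝕜 φ) (fderiv 𝕜 (fderiv 𝕜 φ) x) x :=
  ((hφ.fderiv_right (m := 1) hn).differentiableAt one_ne_zero).hasFDerivAt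

theorem HasFDerivAt.comp_prodMk_right {φ : P × E → F} {L : P × E →L[𝕜] F} {t : P} {x : E}
    (h : HasFDerivAt φ L (t, x)) : HasFDerivAt (fun y => φ (t, y)) (L.comp (inr 𝕜 P E)) x :=
  h.comp x (hasFDerivAt_prodMk_right t x)

theorem HasFDerivAt.hasDerivAt_prodMk_left {φ : 𝕜 × E → F} {L : 𝕜 × E →L[𝕜] F}
    {t : 𝕜} {x : E}
    (h : HasFDerivAt φ L (t, x)) : HasDerivAt (fun s => φ (s, x)) (L (1, 0)) t :=
  h.comp_hasDerivAt t ((hasDerivAt_id t).prodMk (hasDerivAt_const t x))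

theorem HasFDerivAt.of_eventually_slice_apply_eq {G : P × E → V →L[𝕜] F}
    {B : P × E →L[𝕜] V →L[𝕜] F} {t : P} {x : E} (hG : HasFDerivAt G B (t, x)) (v : V)
    {φ : E → F} (hφ : ∀ᶠ y in 𝓝 x, G (t, y) v = φ y) :
    HasFDerivAt φ ((B.flip v).comp (inr 𝕜 P E)) x := by
  have h := hG.comp_prodMk_right.clm_apply (hasFDerivAt_const v x)
  refine (h.congr_of_eventuallyEq (hφ.mono fun y hy => hy.symm)).congr_fderiv ?_
  ext w
  simp

end Slices

section LocalFlow

variable {E : Type*} [NormedAddCommGroup E] [NormedSpace ℝ E]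
  {F : ℝ × E → E} {f : E → E} {p : E}

theorem eventually_fderiv_flow_zero_apply (hF : ContDiffAt ℝ 2 F (0, p))
    (hid : ∀ᶠ x in 𝓝 p, F (0, x) = x)
    (hflow : ∀ᶠ q in 𝓝 (0, p), HasDerivAt (fun s => F (s, q.2)) (f (F q)) q.1) :
    ∀ᶠ y in 𝓝 p, ∀ a v, fderiv ℝ F (0, y) (a, v) = a • f y + v := by
  have hslice : Tendsto (fun y : E => ((0 : ℝ), y)) (𝓝 p) (𝓝 (0, p)) :=
    (continuous_const.prodMk continuous_id).tendsto p
  have hdiff := hslice.eventually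
    ((hF.eventually (by simp)).mono fun q hq => hq.differentiableAt two_ne_zero)
  filter_upwards [hdiff, hslice.eventually hflow, hid.eventually_nhds, hid]
    with y hy hfy hidy hy0
  have htime : fderiv ℝ F (0, y) (1, 0) = f y := by
    simpa [hy0] using hy.hasFDerivAt.hasDerivAt_prodMk_left.unique hfy
  have hspace : (fderiv ℝ F (0, y)).comp (inr ℝ ℝ E) = ContinuousLinearMap.id ℝ E :=
    hy.hasFDerivAt.comp_prodMk_right.unique ((hasFDerivAt_id y).congr_of_eventuallyEq hidy)
  intro a v
  have hav : ((a, v) : ℝ × E) = a • ((1 : ℝ), (0 : E)) + (0, v) := by simp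
  rw [hav, map_add, map_smul, htime]
  simpa using congr($hspace v)

theorem hasFDerivAt_of_flow (hF : ContDiffAt ℝ 2 F (0, p))
    (hid : ∀ᶠ x in 𝓝 p, F (0, x) = x)
    (hflow : ∀ᶠ q in 𝓝 (0, p), HasDerivAt (fun s => F (s, q.2)) (f (F q)) q.1) :
    HasFDerivAt f (((fderiv ℝ (fderiv ℝ F) (0, p)).flip (1, 0)).comp (inr ℝ ℝ E)) p :=
  (hF.hasFDerivAt_fderiv le_rfl).of_eventually_slice_apply_eq _
    ((eventually_fderiv_flow_zero_apply hF hid hflow).mono fun y hy => by simp [hy])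

theorem fderiv_fderiv_flow_inr_inr_eq_zero (hF : ContDiffAt ℝ 2 F (0, p))
    (hid : ∀ᶠ x in 𝓝 p, F (0, x) = x)
    (hflow : ∀ᶠ q in 𝓝 (0, p), HasDerivAt (fun s => F (s, q.2)) (f (F q)) q.1) (w v : E) :
    fderiv ℝ (fderiv ℝ F) (0, p) (0, w) (0, v) = 0 := by
  have h := (hF.hasFDerivAt_fderiv le_rfl).of_eventually_slice_apply_eq ((0 : ℝ), v)
    (φ := fun _ => v) ((eventually_fderiv_flow_zero_apply hF hid hflow).mono fun y hy => by
      simp [hy])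
  simpa using congr($(h.unique (hasFDerivAt_const v p)) w)

theorem hasDerivAt_fderiv_comp_inr_along_reversed_flow (hF : ContDiffAt ℝ 2 F (0, p))
    (hid : ∀ᶠ x in 𝓝 p, F (0, x) = x)
    (hflow : ∀ᶠ q in 𝓝 (0, p), HasDerivAt (fun s => F (s, q.2)) (f (F q)) q.1) :
    HasDerivAt (fun s => (fderiv ℝ F (-s, F (s, p))).comp (inr ℝ ℝ E))
      (-fderiv ℝ f p) 0 := by
  set B := fderiv ℝ (fderiv ℝ F) (0, p)
  have hp : F (0, p) = p := hid.self_of_nhds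
  have hFp : HasDerivAt (fun s => F (s, p)) (f p) 0 := by
    have h := hflow.self_of_nhds
    rwa [hp] at h
  have hB : HasFDerivAt (fderiv ℝ F) B (-(0 : ℝ), F (0, p)) := by
    rw [neg_zero, hp]
    exact hF.hasFDerivAt_fderiv le_rfl
  have hcurve : HasDerivAt (fun s => fderiv ℝ F (-s, F (s, p))) (B ((-1 : ℝ), f p)) 0 :=
    hB.comp_hasDerivAt 0 ((hasDerivAt_neg (0 : ℝ)).prodMk hFp)
  convert hcurve.clm_comp (hasDerivAt_const 0 (inr ℝ ℝ E)) using 1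
  ext w
  have hsplit : ((-1 : ℝ), f p) = -((1 : ℝ), (0 : E)) + (0, f p) := by simp
  simp only [comp_zero, add_zero, neg_apply, comp_apply, inr_apply, flip_apply,
    (hasFDerivAt_of_flow hF hid hflow).fderiv]
  rw [(hF.isSymmSndFDerivAt (by simp)).eq (-1, f p), hsplit, map_add, map_neg,
    fderiv_fderiv_flow_inr_inr_eq_zero hF hid hflow, add_zero]

end LocalFlow

theorem stmt7_general
    {E : Type*} [NormedAddCommGroup E] [NormedSpace ℝ E]
    (U : Set E) (hU : IsOpen U)
    (f g : E → E) (hg : ContDiffOn ℝ 1 g U)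
    (Ω : Set (ℝ × E)) (hΩ : IsOpen Ω) (hΩ0 : ∀ x ∈ U, ((0:ℝ), x) ∈ Ω)
    (Φ : ℝ → E → E)
    (hΦ0 : ∀ x ∈ U, Φ 0 x = x)
    (hflow : ∀ p ∈ Ω, HasDerivAt (fun s => Φ s p.2) (f (Φ p.1 p.2)) p.1)
    (hΦC2 : ContDiffOn ℝ 2 (fun p : ℝ × E => Φ p.1 p.2) Ω)
    (DΦ : ℝ → E → (E →L[ℝ] E))
    (hDΦ : ∀ p ∈ Ω, HasFDerivAt (Φ p.1) (DΦ p.1 p.2) p.2) :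
    ∀ p ∈ U, HasDerivAt (fun s => DΦ (-s) (Φ s p) (g (Φ s p)))
      (fderiv ℝ g p (f p) - fderiv ℝ f p (g p)) 0 := by
  intro p hp
  have hpΩ : ((0 : ℝ), p) ∈ Ω := hΩ0 p hp
  have hid : ∀ᶠ x in 𝓝 p, Φ 0 x = x := eventually_of_mem (hU.mem_nhds hp) hΦ0
  have hDΦ_eq (q : ℝ × E) (hq : q ∈ Ω) :
      DΦ q.1 q.2 = (fderiv ℝ (fun q : ℝ × E => Φ q.1 q.2) q).comp (inr ℝ ℝ E) := by
    have hFq := (hΦC2.contDiffAt (hΩ.mem_nhds hq)).differentiableAt two_ne_zero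
    exact (hDΦ q hq).unique hFq.hasFDerivAt.comp_prodMk_right
  have hDΦ_zero : DΦ (-0) (Φ 0 p) = ContinuousLinearMap.id ℝ E := by
    rw [neg_zero, hΦ0 p hp]
    exact (hDΦ _ hpΩ).unique ((hasFDerivAt_id p).congr_of_eventuallyEq hid)
  have hΦp : HasDerivAt (fun s => Φ s p) (f p) 0 := by simpa [hΦ0 p hp] using hflow _ hpΩ
  have hcurve : ∀ᶠ s in 𝓝 (0 : ℝ), (-s, Φ s p) ∈ Ω :=
    (continuous_neg.continuousAt.prodMk hΦp.continuousAt).preimage_mem_nhds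
      (by rw [neg_zero, hΦ0 p hp]; exact hΩ.mem_nhds hpΩ)
  have hDΦ_curve : HasDerivAt (fun s => DΦ (-s) (Φ s p)) (-fderiv ℝ f p) 0 :=
    (hasDerivAt_fderiv_comp_inr_along_reversed_flow (hΦC2.contDiffAt (hΩ.mem_nhds hpΩ)) hid
      (eventually_of_mem (hΩ.mem_nhds hpΩ) hflow)).congr_of_eventuallyEq
      (hcurve.mono fun s hs => hDΦ_eq _ hs)
  have hg_curve : HasDerivAt (fun s => g (Φ s p)) (fderiv ℝ g p (f p)) 0 := by
    have hgp : HasFDerivAt g (fderiv ℝ g p) (Φ 0 p) := by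
      rw [hΦ0 p hp]
      exact ((hg.contDiffAt (hU.mem_nhds hp)).differentiableAt one_ne_zero).hasFDerivAt
    exact hgp.comp_hasDerivAt 0 hΦp
  convert hDΦ_curve.clm_apply hg_curve using 1
  rw [hDΦ_zero, hΦ0 p hp, neg_apply, id_apply, sub_eq_neg_add]

/-- For `C¹` vector fields `f, g : U → E` on an open subset of a Banach
space, with `Φ` a local flow of `f` (defined on an open `Ω ⊇ {0} × U`) and `DΦ t x` the
derivative of `Φ t` at `x`, for each `p ∈ U` the map
`s ↦ DΦ(−s, Φ(s,p)) (g (Φ(s,p)))` has derivative at `s = 0` equal to the Lie bracket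
`[f,g](p) = dg(p)(f(p)) − df(p)(g(p))`. -/
theorem stmt7
    {E : Type*} [NormedAddCommGroup E] [NormedSpace ℝ E] [CompleteSpace E]
    (U : Set E) (hU : IsOpen U)
    (f g : E → E) (hf : ContDiffOn ℝ 2 f U) (hg : ContDiffOn ℝ 1 g U)
    (Ω : Set (ℝ × E)) (hΩ : IsOpen Ω) (hΩ0 : ∀ x ∈ U, ((0:ℝ), x) ∈ Ω)
    (Φ : ℝ → E → E)
    (hmem : ∀ p ∈ Ω, Φ p.1 p.2 ∈ U)
    (hΦ0 : ∀ x ∈ U, Φ 0 x = x)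
    (hflow : ∀ p ∈ Ω, HasDerivAt (fun s => Φ s p.2) (f (Φ p.1 p.2)) p.1)
    (hΦC2 : ContDiffOn ℝ 2 (fun p : ℝ × E => Φ p.1 p.2) Ω)
    (DΦ : ℝ → E → (E →L[ℝ] E))
    (hDΦ : ∀ p ∈ Ω, HasFDerivAt (Φ p.1) (DΦ p.1 p.2) p.2)
    (hgroup : ∀ s t x, (t, x) ∈ Ω → (s + t, x) ∈ Ω → (s, Φ t x) ∈ Ω →
      Φ (s + t) x = Φ s (Φ t x)) :
    ∀ p ∈ U, HasDerivAt (fun s => DΦ (-s) (Φ s p) (g (Φ s p)))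
      (fderiv ℝ g p (f p) - fderiv ℝ f p (g p)) 0 :=
  stmt7_general U hU f g hg Ω hΩ hΩ0 Φ hΦ0 hflow hΦC2 DΦ hDΦ
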